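/- Let ω ∈ τ(G) for a polygon graph G, with deg(ω) = 2, such that ω takes value 2 on every cycle edge. Then ω equals twice the network consisting of all cycle edges; in particular ω takes value 0 on every cycle leg and is decomposable as a sum of two networks. -/

import Mathlib

/-!
Common setup: finite (multi)graphs with ordered boundary maps `fst`, `snd`
(the boundary is morally unordered; loops and multiple edges are allowed).
-/

structure TGraph where
  V : Type
  E : Type
  [fintV : Fintype V]
  [fintE : Fintype E]
  [decV : DecidableEq V]
  [decE : DecidableEq E]
  fst : E → V
  snd : E → V

namespace TGraph

variable (G : TGraph)

instance : Fintype G.V := G.fintV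
instance : Fintype G.E := G.fintE
instance : DecidableEq G.V := G.decV
instance : DecidableEq G.E := G.decE

/-- Number of endpoints of `e` equal to `v` (a loop counts twice). -/
def mult (v : G.V) (e : G.E) : ℕ :=
  (if G.fst e = v then 1 else 0) + (if G.snd e = v then 1 else 0)

/-- Valency of a vertex (a loop contributes two). -/
def degree (v : G.V) : ℕ := ∑ e, G.mult v e

/-- A leaf is a vertex incident to exactly one edge (valency one). -/
def IsLeaf (v : G.V) : Prop := G.degree v = 1

instance : DecidablePred G.IsLeaf := fun v => inferInstanceAs (Decidable (G.degree v = 1))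

/-- A graph is trivalent when every non-leaf vertex has valency three. -/
def Trivalent : Prop := ∀ v, G.degree v = 1 ∨ G.degree v = 3

/-- The number of leaves. -/
def numLeaves : ℕ := Fintype.card {v : G.V // G.IsLeaf v}

/-- The number of inner (non-leaf) vertices. -/
def numInner : ℕ := Fintype.card {v : G.V // ¬ G.IsLeaf v}

/-- The number of connected components. -/
noncomputable def components : ℕ :=
  Nat.card (Quot fun v w : G.V =>
    ∃ e, (G.fst e = v ∧ G.snd e = w) ∨ (G.fst e = w ∧ G.snd e = v))

/-- The first Betti number, computed via the Euler characteristic: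
`g = |E| - |V| + c`. -/
noncomputable def betti : ℤ := (Fintype.card G.E : ℤ) - Fintype.card G.V + G.components

/-- The value of the vertex functional `v = Σ_{e ∋ v} e*` on an edge labeling. -/
def vsum (v : G.V) (u : G.E → ℤ) : ℤ := ∑ e, (G.mult v e : ℤ) * u e

/-- Membership in the graded lattice `M^gr = ℤ ⊕ M`: the edge labeling has even
sum at every inner vertex. -/
def InMgr (ω : ℤ × (G.E → ℤ)) : Prop :=
  ∀ v, ¬ G.IsLeaf v → Even (G.vsum v ω.2)

/-- Membership in the graded cone `τ(G) ⊂ ℤ ⊕ M`: nonnegative degree and edge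
values, parity at inner vertices, the triangle inequalities at every inner
vertex (encoded as: twice each incident value is at most the local sum), and
the degree bound `deg ω ≥ deg_v ω` at every inner vertex. -/
def InCone (ω : ℤ × (G.E → ℤ)) : Prop :=
  0 ≤ ω.1 ∧ (∀ e, 0 ≤ ω.2 e) ∧
  ∀ v, ¬ G.IsLeaf v →
    Even (G.vsum v ω.2) ∧
    (∀ e, G.mult v e ≠ 0 → 2 * ω.2 e ≤ G.vsum v ω.2) ∧
    G.vsum v ω.2 ≤ 2 * ω.1

/-- A network: a 0-1 edge labeling with even local sum at every inner vertex.
For trivalent graphs this is exactly a disjoint union of leaf-to-leaf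
edge-paths and cycles. -/
def IsNetwork (u : G.E → ℤ) : Prop :=
  (∀ e, u e = 0 ∨ u e = 1) ∧ ∀ v, ¬ G.IsLeaf v → Even (G.vsum v u)

end TGraph

/-- Cyclic successor on `Fin k`. -/
def cnext {k : ℕ} (i : Fin k) : Fin k := ⟨(i.val + 1) % k, Nat.mod_lt _ i.pos⟩

/-- The polygon graph with `k` cycle edges and `k` cycle legs: cycle vertices
`Sum.inl i`, leaf vertices `Sum.inr i`; cycle edges `Sum.inl i` (from cycle
vertex `i` to cycle vertex `i+1`) and cycle legs `Sum.inr i` (from cycle vertex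
`i` to the `i`-th leaf). -/
def polygon (k : ℕ) : TGraph where
  V := Fin k ⊕ Fin k
  E := Fin k ⊕ Fin k
  fst := Sum.elim (fun i => Sum.inl i) (fun i => Sum.inl i)
  snd := Sum.elim (fun i => Sum.inl (cnext i)) (fun i => Sum.inr i)

lemma cnext_eq_finRotate (k : ℕ) : (cnext : Fin k → Fin k) = finRotate k := by
  funext i
  cases k with
  | zero => exact i.elim0
  | succ n =>
    rw [finRotate_apply]
    ext
    simp [cnext, Fin.val_add, Nat.add_mod]

lemma TGraph.degree_eq_vsum (G : TGraph) (v : G.V) : (G.degree v : ℤ) = G.vsum v fun _ => 1 := by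
  simp [TGraph.degree, TGraph.vsum]

namespace polygon

variable {k : ℕ}

lemma vsum_inl (j : Fin k) (u : (polygon k).E → ℤ) :
    (polygon k).vsum (Sum.inl j) u =
      u (Sum.inl ((finRotate k).symm j)) + u (Sum.inl j) + u (Sum.inr j) := by
  have hnext (i : Fin k) : cnext i = j ↔ i = (finRotate k).symm j := by
    rw [cnext_eq_finRotate, Equiv.eq_symm_apply]
  show ∑ e : Fin k ⊕ Fin k, ((polygon k).mult (Sum.inl j) e : ℤ) * u e = _
  simp only [Fintype.sum_sum_type, TGraph.mult, polygon, Sum.elim_inl, Sum.elim_inr,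
    Sum.inl.injEq, hnext, reduceCtorEq, if_false, Nat.cast_add, Nat.cast_ite,
    Nat.cast_one, Nat.cast_zero, add_mul, ite_mul, one_mul, zero_mul, Finset.sum_add_distrib,
    Finset.sum_ite_eq', Finset.mem_univ, if_true, Finset.sum_const_zero, add_zero]
  ring

lemma vsum_inr (j : Fin k) (u : (polygon k).E → ℤ) :
    (polygon k).vsum (Sum.inr j) u = u (Sum.inr j) := by
  show ∑ e : Fin k ⊕ Fin k, ((polygon k).mult (Sum.inr j) e : ℤ) * u e = _
  simp [Fintype.sum_sum_type, TGraph.mult, polygon]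

lemma not_isLeaf_inl (j : Fin k) : ¬ (polygon k).IsLeaf (Sum.inl j) := by
  have h := (polygon k).degree_eq_vsum (Sum.inl j)
  rw [vsum_inl] at h
  unfold TGraph.IsLeaf
  omega

lemma isLeaf_inr (j : Fin k) : (polygon k).IsLeaf (Sum.inr j) := by
  have h := (polygon k).degree_eq_vsum (Sum.inr j)
  rw [vsum_inr] at h
  exact_mod_cast h

end polygon

def cycleNetwork (k : ℕ) : (polygon k).E → ℤ := Sum.elim (fun _ => 1) (fun _ => 0)

lemma cycleNetwork_inCone (k : ℕ) : (polygon k).InCone (1, cycleNetwork k) := by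
  refine ⟨zero_le_one, fun e => by cases e <;> simp [cycleNetwork], ?_⟩
  rintro (j | j) hj
  · have hsum : (polygon k).vsum (Sum.inl j) (cycleNetwork k) = 2 := by
      rw [polygon.vsum_inl]; simp [cycleNetwork]
    simp only [hsum]
    refine ⟨even_two, fun e _ => ?_, le_refl _⟩
    cases e <;> simp [cycleNetwork]
  · exact absurd (polygon.isLeaf_inr j) hj

/-- In a polygon graph, a degree-2 cone element with value 2 on
every cycle edge is twice the all-cycle-edges network: it vanishes on every
cycle leg and decomposes as a sum of two networks. -/
theorem degree_two_all_twos (k : ℕ) (ω : ℤ × ((polygon k).E → ℤ))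
    (hω : (polygon k).InCone ω) (hdeg : ω.1 = 2)
    (hc : ∀ i : Fin k, ω.2 (Sum.inl i) = 2) :
    (∀ i : Fin k, ω.2 (Sum.inr i) = 0) ∧
    (ω.2 = fun e => 2 * Sum.elim (fun _ : Fin k => (1 : ℤ)) (fun _ : Fin k => 0) e) ∧
    ∃ u w : (polygon k).E → ℤ,
      (polygon k).InCone (1, u) ∧ (polygon k).InCone (1, w) ∧ ω = (1, u) + (1, w) := by
  obtain ⟨-, hnonneg, hlocal⟩ := hω
  -- At cycle vertex `i` the two cycle edges already exhaust the bound `vsum ≤ 2 deg = 4`.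
  have hleg (i : Fin k) : ω.2 (Sum.inr i) = 0 := by
    have hle := (hlocal (Sum.inl i) (polygon.not_isLeaf_inl i)).2.2
    rw [polygon.vsum_inl, hc, hc, hdeg] at hle
    linarith [hnonneg (Sum.inr i)]
  have hω₂ : ω.2 = fun e => 2 * cycleNetwork k e := by
    funext e
    rcases e with i | i
    · simp [cycleNetwork, hc i]
    · simp [cycleNetwork, hleg i]
  refine ⟨hleg, hω₂, cycleNetwork k, cycleNetwork k, cycleNetwork_inCone k,
    cycleNetwork_inCone k, ?_⟩
  ext e
  · simp [hdeg]
  · simp [hω₂, two_mul]
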